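/- Let Γ = (V, E) be a Cayley tree of order 2, with fixed root x₀ and balls V_n, and let λ₁₁, λ₂₂, λ₁₂ = λ₂₁ be real numbers. For every n ≥ 1, every β > 0, and every finite set γ ⊆ V, the finite-volume Gibbs measure P_{n,β}^{(1)} of the two-spin model with boundary condition v₁ satisfies P_{n,β}^{(1)} ({ω ∈ Ω_n^{(1)} : some connected component C of ω^{−1}(v₂) has ∂C = γ}) ≤ exp(−β(λ₂₁ + λ₂₂ − 2λ₁₁)·|γ| − 3β(λ₁₁ − λ₂₂)). -/

import Mathlib

/-- A Cayley tree of order 2: a connected acyclic simple graph every vertex of which has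
degree 3. -/
def IsCayleyTree2 {V : Type*} (Γ : SimpleGraph V) : Prop :=
  Γ.Connected ∧ Γ.IsAcyclic ∧ ∀ v : V, (Γ.neighborSet v).ncard = 3

/-- The outer boundary `∂A` of a set of vertices `A`. -/
def outerBoundary {V : Type*} (Γ : SimpleGraph V) (A : Set V) : Set V :=
  {x | x ∉ A ∧ ∃ y ∈ A, Γ.Adj x y}

/-- `C` is a connected component of the subgraph induced on `S`. -/
def IsCompOf {V : Type*} (Γ : SimpleGraph V) (S C : Set V) : Prop :=
  C ⊆ S ∧ C.Nonempty ∧ (Γ.induce C).Connected ∧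
    ∀ x ∈ S, ∀ y ∈ C, Γ.Adj x y → x ∈ C

/-- The ball `V_n = {x : d(x₀, x) ≤ n}` around the root `x₀`. -/
def ballSet {V : Type*} (Γ : SimpleGraph V) (x₀ : V) (n : ℕ) : Set V :=
  {x | Γ.dist x₀ x ≤ n}

/-- The set of edges of `Γ` having at least one endpoint in `A`. -/
def meetingEdges {V : Type*} (Γ : SimpleGraph V) (A : Set V) : Set (Sym2 V) :=
  {e | e ∈ Γ.edgeSet ∧ ∃ x ∈ A, x ∈ e}

/-- `Ω_n^{(1)}`: configurations with values in `{v₁, v₂}` equal to `v₁` outside `V_n`. -/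
def OmegaGen {V W : Type*} (Γ : SimpleGraph V) (x₀ : V) (n : ℕ) (v₁ v₂ : W) :
    Set (V → W) :=
  {ω | (∀ x, ω x = v₁ ∨ ω x = v₂) ∧ ∀ x ∉ ballSet Γ x₀ n, ω x = v₁}

/-- The energy `H_n^{(1)}(ω) = ∑ λ(ω(x), ω(y))`, the sum over all edges meeting `V_n`, of
the two-spin model with symmetric interaction `lam`. -/
noncomputable def genH {V W : Type*} (Γ : SimpleGraph V) (x₀ : V) (n : ℕ)
    (lam : W → W → ℝ) (hsymm : ∀ a b, lam a b = lam b a) (ω : V → W) : ℝ :=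
  ∑ᶠ e ∈ meetingEdges Γ (ballSet Γ x₀ n),
    Sym2.lift ⟨fun x y => lam (ω x) (ω y), fun x y => hsymm (ω x) (ω y)⟩ e

/-- The finite-volume Gibbs measure `P_{n,β}^{(1)}` of the two-spin model with boundary
condition `v₁`. -/
noncomputable def genGibbs {V W : Type*} (Γ : SimpleGraph V) (x₀ : V) (n : ℕ)
    (v₁ v₂ : W) (lam : W → W → ℝ) (hsymm : ∀ a b, lam a b = lam b a) (β : ℝ)
    (A : Set (V → W)) : ℝ :=
  (∑ᶠ ω ∈ A ∩ OmegaGen Γ x₀ n v₁ v₂, Real.exp (-β * genH Γ x₀ n lam hsymm ω)) /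
    ∑ᶠ ω ∈ OmegaGen Γ x₀ n v₁ v₂, Real.exp (-β * genH Γ x₀ n lam hsymm ω)

section helpers
variable {V : Type*} {Γ : SimpleGraph V}

lemma nbr_finite (hΓ : IsCayleyTree2 Γ) (v : V) : (Γ.neighborSet v).Finite := by
  by_contra h
  have h0 := Set.Infinite.ncard h
  rw [hΓ.2.2 v] at h0; exact three_ne_zero h0

lemma ballSet_finite (hΓ : IsCayleyTree2 Γ) (x₀ : V) (n : ℕ) : (ballSet Γ x₀ n).Finite := by
  induction n with
  | zero =>
    apply Set.Finite.subset (Set.finite_singleton x₀)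
    intro x hx
    have h0 : Γ.dist x₀ x = 0 := Nat.le_zero.mp hx
    have := (hΓ.1.dist_eq_zero_iff).mp h0
    exact this ▸ rfl
  | succ n ih =>
    apply Set.Finite.subset (ih.union (Set.Finite.biUnion ih (fun y _ => nbr_finite hΓ y)))
    intro x hx
    by_cases hxn : Γ.dist x₀ x ≤ n
    · exact Or.inl hxn
    · right
      have hne : x ≠ x₀ := by
        rintro rfl; exact hxn (by simp [SimpleGraph.dist_self])
      obtain ⟨w, hw⟩ := hΓ.1.exists_walk_length_eq_dist x₀ x
      obtain ⟨y, hadj, p, hp⟩ := SimpleGraph.Walk.exists_eq_cons_of_ne hne w.reverse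
      have hylen : p.length = n := by
        have := congrArg SimpleGraph.Walk.length hp
        rw [SimpleGraph.Walk.length_reverse, SimpleGraph.Walk.length_cons, hw] at this
        have hd : Γ.dist x₀ x = n + 1 := le_antisymm hx (Nat.succ_le_of_lt (Nat.lt_of_not_le hxn))
        omega
      have hdy : Γ.dist x₀ y ≤ n := by
        have := SimpleGraph.dist_le p.reverse
        rwa [SimpleGraph.Walk.length_reverse, hylen] at this
      refine Set.mem_biUnion hdy ?_
      exact hadj.symm

lemma omegaGen_finite {W : Type*} (hΓ : IsCayleyTree2 Γ) (x₀ : V) (n : ℕ) {v₁ v₂ : W}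
    (hv : v₁ ≠ v₂) : (OmegaGen Γ x₀ n v₁ v₂).Finite := by
  classical
  have hB := ballSet_finite hΓ x₀ n
  have : Finite ↥(ballSet Γ x₀ n) := hB
  apply Set.Finite.of_finite_image
    (f := fun ω (x : ballSet Γ x₀ n) => ω x.1 = v₂) (Set.toFinite _)
  intro ω1 h1 ω2 h2 he
  funext x
  by_cases hx : x ∈ ballSet Γ x₀ n
  · have hpe : (ω1 x = v₂) = (ω2 x = v₂) := congrFun he ⟨x, hx⟩
    rcases h1.1 x with h | h <;> rcases h2.1 x with h' | h'
    · rw [h, h']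
    · exact absurd (hpe ▸ h') (h ▸ hv)
    · exact absurd (hpe.symm ▸ h) (h' ▸ hv)
    · rw [h, h']
  · rw [h1.2 x hx, h2.2 x hx]

lemma meetingEdges_finite (hΓ : IsCayleyTree2 Γ) {A : Set V} (hA : A.Finite) :
    (meetingEdges Γ A).Finite := by
  have hN : (A ∪ ⋃ x ∈ A, Γ.neighborSet x).Finite :=
    hA.union (hA.biUnion fun x _ => nbr_finite hΓ x)
  refine Set.Finite.subset ((hN.prod hN).image (fun p : V × V => Sym2.mk p.1 p.2)) ?_
  rintro e ⟨hE, x, hxA, hxe⟩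
  induction e with
  | h a b =>
    have hadj : Γ.Adj a b := hE
    rcases Sym2.mem_iff.mp hxe with rfl | rfl
    · exact ⟨(x, b), ⟨Or.inl hxA, Or.inr (Set.mem_biUnion hxA hadj)⟩, rfl⟩
    · exact ⟨(a, x), ⟨Or.inr (Set.mem_biUnion hxA hadj.symm), Or.inl hxA⟩, rfl⟩

lemma exists_walk_in {C : Set V} (hconn : (Γ.induce C).Connected) {x y : V}
    (hx : x ∈ C) (hy : y ∈ C) : ∃ w : Γ.Walk x y, ∀ z ∈ w.support, z ∈ C := by
  obtain ⟨w⟩ := hconn ⟨x, hx⟩ ⟨y, hy⟩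
  refine ⟨w.map (SimpleGraph.Embedding.induce C).toHom, ?_⟩
  intro z hz
  have hz2 : z ∈ (w.map (SimpleGraph.Embedding.induce C).toHom).support := hz
  rw [SimpleGraph.Walk.support_map] at hz2
  obtain ⟨⟨z', hz'⟩, _, rfl⟩ := List.mem_map.mp hz2
  exact hz'

lemma unique_nbr (hac : Γ.IsAcyclic) {C : Set V} (hconn : (Γ.induce C).Connected)
    {a y₁ y₂ : V} (ha : a ∉ C) (h1 : y₁ ∈ C) (h2 : y₂ ∈ C)
    (e1 : Γ.Adj a y₁) (e2 : Γ.Adj a y₂) : y₁ = y₂ := by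
  classical
  by_contra hne
  obtain ⟨w, hw⟩ := exists_walk_in hconn h1 h2
  have hq2 : (SimpleGraph.Walk.cons e1 (w.toPath : Γ.Walk y₁ y₂)).IsPath := by
    rw [SimpleGraph.Walk.cons_isPath_iff]
    exact ⟨(w.toPath).2, fun hmem => ha (hw _ (SimpleGraph.Walk.support_toPath_subset w hmem))⟩
  have hq1 : (SimpleGraph.Walk.cons e2 (SimpleGraph.Walk.nil : Γ.Walk y₂ y₂)).IsPath := by
    simp [SimpleGraph.Walk.cons_isPath_iff, e2.ne]
  have := hac.path_unique ⟨_, hq1⟩ ⟨_, hq2⟩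
  have hsup := congrArg (fun p : Γ.Path a y₂ => y₁ ∈ (p : Γ.Walk a y₂).support) this
  simp only [SimpleGraph.Walk.support_cons, SimpleGraph.Walk.support_nil] at hsup
  rw [eq_iff_iff] at hsup
  have : y₁ ∈ [a, y₂] := hsup.mpr (by simp [SimpleGraph.Walk.start_mem_support])
  simp only [List.mem_cons, List.not_mem_nil, or_false] at this
  rcases this with rfl | rfl
  · exact ha h1
  · exact hne rfl

lemma walk_crossing {P Q : Set V} : ∀ {x y : V} (wk : Γ.Walk x y), x ∉ Q → y ∈ Q →
    (∀ z ∈ wk.support, z ∈ P) →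
    ∃ u w, u ∈ P ∧ u ∉ Q ∧ w ∈ P ∧ w ∈ Q ∧ Γ.Adj u w := by
  intro x y wk
  induction wk with
  | nil => intro hx hy _; exact absurd hy hx
  | @cons x m y hadj p ih =>
    intro hx hy hsup
    by_cases hm : m ∈ Q
    · exact ⟨x, m, hsup x (by simp), hx, hsup m (by simp), hm, hadj⟩
    · exact ih hm hy (fun z hz => hsup z (by simp [hz]))

lemma not_disjoint_same_boundary (hac : Γ.IsAcyclic) {C₁ C₂ : Set V}
    (h1 : (Γ.induce C₁).Connected) (h2 : (Γ.induce C₂).Connected)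
    (hdisj : ∀ x, ¬(x ∈ C₁ ∧ x ∈ C₂)) {a b : V} (hab : a ≠ b)
    (haB1 : a ∈ outerBoundary Γ C₁) (haB2 : a ∈ outerBoundary Γ C₂)
    (hbB1 : b ∈ outerBoundary Γ C₁) (hbB2 : b ∈ outerBoundary Γ C₂) : False := by
  classical
  obtain ⟨ha1, y₁, hy₁, hay₁⟩ := haB1
  obtain ⟨ha2, y₂, hy₂, hay₂⟩ := haB2
  obtain ⟨hb1, z₁, hz₁, hbz₁⟩ := hbB1
  obtain ⟨hb2, z₂, hz₂, hbz₂⟩ := hbB2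
  obtain ⟨w₁, hw₁⟩ := exists_walk_in h1 hy₁ hz₁
  obtain ⟨w₂, hw₂⟩ := exists_walk_in h2 hz₂ hy₂
  have hy12 : y₁ ≠ y₂ := fun h => hdisj y₁ ⟨hy₁, h ▸ hy₂⟩
  have hQ1 : (SimpleGraph.Walk.cons hay₁.symm
      (SimpleGraph.Walk.cons hay₂ SimpleGraph.Walk.nil)).IsPath := by
    simp only [SimpleGraph.Walk.cons_isPath_iff, SimpleGraph.Walk.support_cons,
      SimpleGraph.Walk.support_nil, List.mem_cons, List.not_mem_nil, or_false]
    refine ⟨⟨by simp, by simp [hay₂.ne]⟩, ?_⟩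
    rintro (h | h)
    · exact ha1 (h ▸ hy₁)
    · exact hy12 h
  let W₂ : Γ.Walk y₁ y₂ :=
    w₁.append (SimpleGraph.Walk.cons hbz₁.symm (SimpleGraph.Walk.cons hbz₂ w₂))
  have haW : a ∉ W₂.support := by
    intro hmem
    rw [SimpleGraph.Walk.mem_support_append_iff] at hmem
    rcases hmem with hmem | hmem
    · exact ha1 (hw₁ a hmem)
    · simp only [SimpleGraph.Walk.support_cons, List.mem_cons] at hmem
      rcases hmem with h | h | h
      · exact ha1 (by rw [h]; exact hz₁)
      · exact hab h
      · exact ha2 (hw₂ a h)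
  have := hac.path_unique ⟨_, hQ1⟩ W₂.toPath
  apply haW
  apply SimpleGraph.Walk.support_toPath_subset W₂
  have hsupp : (W₂.toPath : Γ.Walk y₁ y₂).support =
      (SimpleGraph.Walk.cons hay₁.symm
        (SimpleGraph.Walk.cons hay₂ SimpleGraph.Walk.nil)).support := by
    rw [← this]
  rw [hsupp]
  simp

lemma tree_count (hΓ : IsCayleyTree2 Γ) {C : Set V} (hC : C.Finite)
    (hconn : (Γ.induce C).Connected) (Fint Fbd : Finset (Sym2 V))
    (hFint : ∀ e, e ∈ Fint ↔ e ∈ Γ.edgeSet ∧ ∀ x ∈ e, x ∈ C)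
    (hFbd : ∀ e, e ∈ Fbd ↔ e ∈ Γ.edgeSet ∧ (∃ x ∈ C, x ∈ e) ∧ ¬∀ x ∈ e, x ∈ C) :
    (outerBoundary Γ C).Finite ∧ Fbd.card = Fint.card + 3 ∧
      (outerBoundary Γ C).ncard = Fint.card + 3 ∧ C.ncard = Fint.card + 1 := by
  classical
  letI : Fintype ↥C := hC.fintype
  set G' : SimpleGraph ↥C := Γ.induce C with hG'
  letI : DecidableEq ↥C := Classical.decEq _
  letI : DecidableRel G'.Adj := Classical.decRel _
  have hinj : Function.Injective ⇑(SimpleGraph.Embedding.induce (G := Γ) C).toHom :=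
    Subtype.val_injective
  have hac' : G'.IsAcyclic := by
    intro v c hc
    exact hΓ.2.1 _ ((SimpleGraph.Walk.map_isCycle_iff_of_injective hinj).mpr hc)
  have hT : G'.IsTree := ⟨hconn, hac'⟩
  have hcard := hT.card_edgeFinset
  set E := G'.edgeFinset.card with hE
  have hFintim : Fint = G'.edgeFinset.image (Sym2.map Subtype.val) := by
    ext e
    rw [hFint, Finset.mem_image]
    constructor
    · rintro ⟨hE', hsub⟩
      induction e with
      | h x y =>
        have hx : x ∈ C := hsub x (by simp)
        have hy : y ∈ C := hsub y (by simp)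
        refine ⟨s(⟨x, hx⟩, ⟨y, hy⟩), ?_, by rw [Sym2.map_pair_eq]⟩
        rw [SimpleGraph.mem_edgeFinset, SimpleGraph.mem_edgeSet]
        exact hE'
    · rintro ⟨e', he', rfl⟩
      induction e' with
      | h x y =>
        rw [SimpleGraph.mem_edgeFinset, SimpleGraph.mem_edgeSet] at he'
        rw [Sym2.map_pair_eq]
        refine ⟨he', ?_⟩
        intro z hz
        rcases Sym2.mem_iff.mp hz with rfl | rfl
        · exact x.2
        · exact y.2
  have hFintcard : Fint.card = E := by
    rw [hFintim, Finset.card_image_of_injective _ (Sym2.map.injective Subtype.val_injective)]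
  have hdeg : ∀ v : ↥C, G'.degree v + (Γ.neighborSet ↑v \ C).ncard = 3 := by
    rintro ⟨x, hx⟩
    have h3 := hΓ.2.2 x
    rw [← Set.ncard_inter_add_ncard_diff_eq_ncard (Γ.neighborSet x) C (nbr_finite hΓ x)] at h3
    have himg : Subtype.val '' (G'.neighborSet ⟨x, hx⟩) = Γ.neighborSet x ∩ C := by
      ext y
      constructor
      · rintro ⟨⟨y', hy'⟩, hadj, rfl⟩
        exact ⟨hadj, hy'⟩
      · rintro ⟨hadj, hyC⟩
        exact ⟨⟨y, hyC⟩, hadj, rfl⟩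
    have hdval : G'.degree ⟨x, hx⟩ = (G'.neighborSet ⟨x, hx⟩).ncard := by
      rw [SimpleGraph.degree, Set.ncard_eq_toFinset_card']
      congr 1
    rw [hdval, ← Set.ncard_image_of_injective _ Subtype.val_injective, himg]
    exact h3
  have hsumdeg : ∑ v : ↥C, G'.degree v = 2 * E := by
    have := G'.sum_degrees_eq_twice_card_edges
    rwa [← hE] at this
  have hsumbd : ∑ v : ↥C, (Γ.neighborSet ↑v \ C).ncard = E + 3 := by
    have h1 : ∑ v : ↥C, (G'.degree v + (Γ.neighborSet ↑v \ C).ncard) = 3 * Fintype.card ↥C := by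
      rw [Finset.sum_congr rfl (fun v _ => hdeg v)]
      simp [Finset.card_univ, mul_comm]
    rw [Finset.sum_add_distrib, hsumdeg] at h1
    omega
  let D : Finset V := hC.toFinset.biUnion (fun x => ((nbr_finite hΓ x).diff : (Γ.neighborSet x \ C).Finite).toFinset)
  have hmemD : ∀ a, a ∈ D ↔ a ∈ outerBoundary Γ C := by
    intro a
    simp only [D, Finset.mem_biUnion, Set.Finite.mem_toFinset, Set.mem_diff,
      SimpleGraph.mem_neighborSet, outerBoundary, Set.mem_setOf_eq]
    constructor
    · rintro ⟨x, hxC, hadj, haC⟩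
      exact ⟨haC, x, hxC, hadj.symm⟩
    · rintro ⟨haC, y, hyC, hadj⟩
      exact ⟨y, hyC, hadj.symm, haC⟩
  have hOBfin : (outerBoundary Γ C).Finite := by
    apply Set.Finite.subset (D : Set V).toFinite
    intro a ha; exact (hmemD a).mpr ha
  have hOBcoe : outerBoundary Γ C = ↑D := by
    ext a; rw [Finset.mem_coe, hmemD]
  have hDcard : D.card = E + 3 := by
    rw [Finset.card_biUnion]
    · calc ∑ x ∈ hC.toFinset, ((nbr_finite hΓ x).diff : (Γ.neighborSet x \ C).Finite).toFinset.card
          = ∑ x ∈ hC.toFinset, (Γ.neighborSet x \ C).ncard := by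
            refine Finset.sum_congr rfl (fun x _ => ?_)
            rw [Set.ncard_eq_toFinset_card _ ((nbr_finite hΓ x).diff : (Γ.neighborSet x \ C).Finite)]
        _ = ∑ v : ↥C, (Γ.neighborSet ↑v \ C).ncard :=
            Finset.sum_subtype _ (fun x => hC.mem_toFinset) _
        _ = E + 3 := hsumbd
    · intro x hx y hy hxy
      simp only [Finset.disjoint_left, Set.Finite.mem_toFinset, Set.mem_diff,
        SimpleGraph.mem_neighborSet]
      rintro a ⟨hax, haC⟩ ⟨hay, -⟩
      exact hxy (unique_nbr hΓ.2.1 hconn haC (hC.mem_toFinset.mp hx) (hC.mem_toFinset.mp hy)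
        hax.symm hay.symm)
  have hbij : D.card = Fbd.card := by
    refine Finset.card_bij (fun a ha => s(a, (((hmemD a).mp ha).2).choose)) ?_ ?_ ?_
    · intro a ha
      obtain ⟨haC, hex⟩ := (hmemD a).mp ha
      obtain ⟨hyC, hadj⟩ := hex.choose_spec
      rw [hFbd]
      refine ⟨hadj, ⟨hex.choose, hyC, by simp⟩, ?_⟩
      intro hall
      exact haC (hall a (by simp))
    · intro a₁ ha₁ a₂ ha₂ heq
      obtain ⟨haC₁, hex₁⟩ := (hmemD a₁).mp ha₁
      obtain ⟨haC₂, hex₂⟩ := (hmemD a₂).mp ha₂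
      rcases Sym2.eq_iff.mp heq with ⟨h, -⟩ | ⟨h, -⟩
      · exact h
      · exact absurd (h ▸ hex₂.choose_spec.1) haC₁
    · intro e he
      rw [hFbd] at he
      obtain ⟨heE, ⟨x, hxC, hxe⟩, hnall⟩ := he
      induction e with
      | h u w =>
        have hadj : Γ.Adj u w := heE
        rcases Sym2.mem_iff.mp hxe with rfl | rfl
        · have hwC : w ∉ C := by
            intro hwC
            exact hnall (fun z hz => by rcases Sym2.mem_iff.mp hz with rfl | rfl <;> assumption)
          have haD : w ∈ D := (hmemD w).mpr ⟨hwC, x, hxC, hadj.symm⟩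
          refine ⟨w, haD, ?_⟩
          obtain ⟨hyC, hadj'⟩ := (((hmemD w).mp haD).2).choose_spec
          have heq := unique_nbr hΓ.2.1 hconn hwC hyC hxC hadj' hadj.symm
          have hgoal : s(w, (((hmemD w).mp haD).2).choose) = s(x, w) := by
            rw [heq]; exact Sym2.eq_swap
          exact hgoal
        · have huC : u ∉ C := by
            intro huC
            exact hnall (fun z hz => by rcases Sym2.mem_iff.mp hz with rfl | rfl <;> assumption)
          have haD : u ∈ D := (hmemD u).mpr ⟨huC, x, hxC, hadj⟩
          refine ⟨u, haD, ?_⟩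
          obtain ⟨hyC, hadj'⟩ := (((hmemD u).mp haD).2).choose_spec
          have heq := unique_nbr hΓ.2.1 hconn huC hyC hxC hadj' hadj
          have hgoal : s(u, (((hmemD u).mp haD).2).choose) = s(u, x) := by rw [heq]
          exact hgoal
  have hCcard : C.ncard = E + 1 := by
    rw [Set.ncard_eq_toFinset_card', Set.toFinset_card]
    omega
  refine ⟨hOBfin, by omega, ?_, by rw [hFintcard]; exact hCcard⟩
  rw [hOBcoe, Set.ncard_coe_finset]
  omega

/-- Data extraction for a component: with `M` the meeting edges of `C`,
the filtered finsets satisfy tree_count's hypotheses. -/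
lemma contour_count (hΓ : IsCayleyTree2 Γ) {C : Set V} (hC : C.Finite)
    (hconn : (Γ.induce C).Connected) :
    ∃ m : ℕ, C.ncard = m + 1 ∧ (outerBoundary Γ C).Finite ∧
      (outerBoundary Γ C).ncard = m + 3 ∧
      ∃ Fint Fbd : Finset (Sym2 V),
        (∀ e, e ∈ Fint ↔ e ∈ Γ.edgeSet ∧ ∀ x ∈ e, x ∈ C) ∧
        (∀ e, e ∈ Fbd ↔ e ∈ Γ.edgeSet ∧ (∃ x ∈ C, x ∈ e) ∧ ¬∀ x ∈ e, x ∈ C) ∧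
        Fint.card = m ∧ Fbd.card = m + 3 := by
  classical
  have hM := meetingEdges_finite hΓ hC
  set Fint : Finset (Sym2 V) := hM.toFinset.filter (fun e => ∀ x ∈ e, x ∈ C) with hFintdef
  set Fbd : Finset (Sym2 V) := hM.toFinset.filter (fun e => ¬∀ x ∈ e, x ∈ C) with hFbddef
  have hFintmem : ∀ e, e ∈ Fint ↔ e ∈ Γ.edgeSet ∧ ∀ x ∈ e, x ∈ C := by
    intro e
    rw [hFintdef, Finset.mem_filter, Set.Finite.mem_toFinset]
    constructor
    · rintro ⟨⟨h1, -⟩, h2⟩; exact ⟨h1, h2⟩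
    · rintro ⟨h1, h2⟩
      refine ⟨⟨h1, ?_⟩, h2⟩
      induction e with
      | h a b => exact ⟨a, h2 a (by simp), by simp⟩
  have hFbdmem : ∀ e, e ∈ Fbd ↔ e ∈ Γ.edgeSet ∧ (∃ x ∈ C, x ∈ e) ∧ ¬∀ x ∈ e, x ∈ C := by
    intro e
    rw [hFbddef, Finset.mem_filter, Set.Finite.mem_toFinset]
    constructor
    · rintro ⟨⟨h1, h2⟩, h3⟩; exact ⟨h1, h2, h3⟩
    · rintro ⟨h1, h2, h3⟩; exact ⟨⟨h1, h2⟩, h3⟩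
  obtain ⟨hOBfin, hc1, hc2, hc3⟩ := tree_count hΓ hC hconn Fint Fbd hFintmem hFbdmem
  exact ⟨Fint.card, hc3, hOBfin, hc2, Fint, Fbd, hFintmem, hFbdmem, rfl, hc1⟩

end helpers

/-- Contour bound for the two-spin model: the `P_{n,β}^{(1)}`-probability that a fixed
finite set `γ` occurs as a contour (the outer boundary of a connected component of
`ω⁻¹(v₂)`) is at most `exp(−β(λ₂₁ + λ₂₂ − 2λ₁₁)|γ| − 3β(λ₁₁ − λ₂₂))`. -/
theorem gen_contour_probability_bound {V W : Type*} (Γ : SimpleGraph V)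
    (hΓ : IsCayleyTree2 Γ) (x₀ : V) (v₁ v₂ : W) (hv : v₁ ≠ v₂) (lam : W → W → ℝ)
    (hsymm : ∀ a b, lam a b = lam b a) (n : ℕ) (hn : 1 ≤ n) (β : ℝ) (hβ : 0 < β)
    (γ : Set V) (hγ : γ.Finite) :
    genGibbs Γ x₀ n v₁ v₂ lam hsymm β
        {ω | ∃ C : Set V, IsCompOf Γ {x | ω x = v₂} C ∧ outerBoundary Γ C = γ} ≤
      Real.exp (-β * (lam v₂ v₁ + lam v₂ v₂ - 2 * lam v₁ v₁) * (γ.ncard : ℝ) -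
        3 * β * (lam v₁ v₁ - lam v₂ v₂)) := by
  classical
  set B := ballSet Γ x₀ n with hBdef
  have hBfin : B.Finite := ballSet_finite hΓ x₀ n
  set Ω : Set (V → W) := OmegaGen Γ x₀ n v₁ v₂ with hΩdef
  have hΩfin : Ω.Finite := omegaGen_finite hΓ x₀ n hv
  have hSfin : (meetingEdges Γ B).Finite := meetingEdges_finite hΓ hBfin
  set A : Set (V → W) :=
    {ω | ∃ C : Set V, IsCompOf Γ {x | ω x = v₂} C ∧ outerBoundary Γ C = γ} with hAdef
  have hEvfin : (A ∩ Ω).Finite := hΩfin.subset Set.inter_subset_right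
  set K : ℝ := Real.exp (-β * (lam v₂ v₁ + lam v₂ v₂ - 2 * lam v₁ v₁) * (γ.ncard : ℝ) -
      3 * β * (lam v₁ v₁ - lam v₂ v₂)) with hKdef
  set f : (V → W) → Sym2 V → ℝ :=
    fun ω => Sym2.lift ⟨fun x y => lam (ω x) (ω y), fun x y => hsymm (ω x) (ω y)⟩ with hfdef
  have hfval : ∀ (σ : V → W) (a b : V), f σ s(a, b) = lam (σ a) (σ b) := by
    intro σ a b; rw [hfdef]; rfl
  have hH : ∀ ω, genH Γ x₀ n lam hsymm ω = ∑ e ∈ hSfin.toFinset, f ω e := by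
    intro ω
    rw [genH]
    exact finsum_mem_eq_finite_toFinset_sum _ hSfin
  -- the component-choosing function and the flip map
  set Cof : (V → W) → Set V := fun ω =>
    if h : ∃ C : Set V, IsCompOf Γ {x | ω x = v₂} C ∧ outerBoundary Γ C = γ then h.choose
    else ∅ with hCofdef
  have hCofspec : ∀ ω ∈ A, IsCompOf Γ {x | ω x = v₂} (Cof ω) ∧ outerBoundary Γ (Cof ω) = γ := by
    intro ω hω
    have h : ∃ C : Set V, IsCompOf Γ {x | ω x = v₂} C ∧ outerBoundary Γ C = γ := hω
    simp only [hCofdef, dif_pos h]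
    exact h.choose_spec
  set T : (V → W) → (V → W) := fun ω x => if x ∈ Cof ω then v₁ else ω x with hTdef
  -- basic facts about the chosen component for ω ∈ A ∩ Ω
  have hCB : ∀ ω ∈ A ∩ Ω, Cof ω ⊆ B := by
    rintro ω ⟨hωA, hωΩ⟩ x hx
    have hx2 : ω x = v₂ := (hCofspec ω hωA).1.1 hx
    by_contra hxB
    exact hv ((hωΩ.2 x hxB).symm.trans hx2)
  -- key: flipped configuration is in Ω and the weights compare
  have key : ∀ ω ∈ A ∩ Ω, T ω ∈ Ω ∧
      Real.exp (-β * genH Γ x₀ n lam hsymm ω) =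
        K * Real.exp (-β * genH Γ x₀ n lam hsymm (T ω)) := by
    rintro ω ⟨hωA, hωΩ⟩
    obtain ⟨hcomp, hbd⟩ := hCofspec ω hωA
    set C : Set V := Cof ω with hCdef
    have hsubv2 : C ⊆ {x | ω x = v₂} := hcomp.1
    have hCBω : C ⊆ B := hCB ω ⟨hωA, hωΩ⟩
    have hCfin : C.Finite := hBfin.subset hCBω
    have hTΩ : T ω ∈ Ω := by
      constructor
      · intro x
        by_cases hx : x ∈ Cof ω
        · exact Or.inl (by simp only [hTdef, if_pos hx])
        · simp only [hTdef, if_neg hx]; exact hωΩ.1 x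
      · intro x hx
        have hxC : x ∉ Cof ω := fun hc => hx (hCBω hc)
        simp only [hTdef, if_neg hxC]
        exact hωΩ.2 x hx
    refine ⟨hTΩ, ?_⟩
    -- counting data
    obtain ⟨m, hCcard, hOBfin, hOBcard, Fint, Fbd, hFintmem, hFbdmem, hFintcard, hFbdcard⟩ :=
      contour_count hΓ hCfin hcomp.2.2.1
    have hγcard : γ.ncard = m + 3 := by rw [← hbd]; exact hOBcard
    -- the touching edges
    have hMfin : (meetingEdges Γ C).Finite := meetingEdges_finite hΓ hCfin
    set Ft : Finset (Sym2 V) := hMfin.toFinset with hFtdef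
    have hFtsub : Ft ⊆ hSfin.toFinset := by
      intro e he
      rw [hFtdef, Set.Finite.mem_toFinset] at he
      rw [Set.Finite.mem_toFinset]
      exact ⟨he.1, he.2.choose, hCBω he.2.choose_spec.1, he.2.choose_spec.2⟩
    -- ω equals T ω off C
    have hToff : ∀ x, x ∉ C → T ω x = ω x := by
      intro x hx; simp only [hTdef]; exact if_neg hx
    have hTon : ∀ x, x ∈ C → T ω x = v₁ := by
      intro x hx; simp only [hTdef]; exact if_pos hx
    -- boundary endpoints carry v₁
    have hbval : ∀ a, a ∉ C → ∀ y ∈ C, Γ.Adj a y → ω a = v₁ := by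
      intro a haC y hyC hadj
      rcases hωΩ.1 a with h | h
      · exact h
      · exact absurd (hcomp.2.2.2 a h y hyC hadj) haC
    -- difference sum
    have hdiff : ∑ e ∈ hSfin.toFinset, (f ω e - f (T ω) e) =
        (m : ℝ) * (lam v₂ v₂ - lam v₁ v₁) + ((m : ℝ) + 3) * (lam v₂ v₁ - lam v₁ v₁) := by
      rw [← Finset.sum_subset hFtsub]
      · -- sum over touching edges
        have hsplit := Finset.sum_filter_add_sum_filter_not Ft (fun e => ∀ x ∈ e, x ∈ C)
          (fun e => f ω e - f (T ω) e)
        rw [← hsplit]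
        have hFiltInt : Ft.filter (fun e => ∀ x ∈ e, x ∈ C) = Fint := by
          ext e
          rw [Finset.mem_filter, hFintmem e, hFtdef, Set.Finite.mem_toFinset]
          constructor
          · rintro ⟨⟨h1, -⟩, h2⟩; exact ⟨h1, h2⟩
          · rintro ⟨h1, h2⟩
            refine ⟨⟨h1, ?_⟩, h2⟩
            induction e with
            | h a b => exact ⟨a, h2 a (by simp), by simp⟩
        have hFiltBd : Ft.filter (fun e => ¬∀ x ∈ e, x ∈ C) = Fbd := by
          ext e
          rw [Finset.mem_filter, hFbdmem e, hFtdef, Set.Finite.mem_toFinset]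
          constructor
          · rintro ⟨⟨h1, h2⟩, h3⟩; exact ⟨h1, h2, h3⟩
          · rintro ⟨h1, h2, h3⟩; exact ⟨⟨h1, h2⟩, h3⟩
        rw [hFiltInt, hFiltBd]
        have hIntval : ∀ e ∈ Fint, f ω e - f (T ω) e = lam v₂ v₂ - lam v₁ v₁ := by
          intro e he
          rw [hFintmem e] at he
          obtain ⟨heE, hall⟩ := he
          induction e with
          | h a b =>
            have ha : a ∈ C := hall a (by simp)
            have hb : b ∈ C := hall b (by simp)
            rw [hfval, hfval, hsubv2 ha, hsubv2 hb, hTon a ha, hTon b hb]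
        have hBdval : ∀ e ∈ Fbd, f ω e - f (T ω) e = lam v₂ v₁ - lam v₁ v₁ := by
          intro e he
          rw [hFbdmem e] at he
          obtain ⟨heE, ⟨x, hxC, hxe⟩, hnall⟩ := he
          induction e with
          | h a b =>
            have hadj : Γ.Adj a b := heE
            rcases Sym2.mem_iff.mp hxe with rfl | rfl
            · -- x = a ∈ C, b ∉ C
              have hbC : b ∉ C := fun hbC =>
                hnall (fun z hz => by rcases Sym2.mem_iff.mp hz with rfl | rfl <;> assumption)
              rw [hfval, hfval, hsubv2 hxC, hbval b hbC x hxC hadj.symm,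
                hTon x hxC, hToff b hbC, hbval b hbC x hxC hadj.symm]
            · -- x = b ∈ C, a ∉ C
              have haC : a ∉ C := fun haC =>
                hnall (fun z hz => by rcases Sym2.mem_iff.mp hz with rfl | rfl <;> assumption)
              rw [hfval, hfval, hsubv2 hxC, hbval a haC x hxC hadj,
                hTon x hxC, hToff a haC, hbval a haC x hxC hadj, hsymm v₁ v₂]
        rw [Finset.sum_congr rfl hIntval, Finset.sum_congr rfl hBdval,
          Finset.sum_const, Finset.sum_const, hFintcard, hFbdcard, nsmul_eq_mul, nsmul_eq_mul]
        push_cast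
        ring
      · -- vanishing off touching edges
        intro e heS heFt
        rw [Set.Finite.mem_toFinset] at heS
        rw [hFtdef, Set.Finite.mem_toFinset] at heFt
        have hnotouch : ¬∃ x ∈ C, x ∈ e := fun h => heFt ⟨heS.1, h⟩
        induction e with
        | h a b =>
          have haC : a ∉ C := fun h => hnotouch ⟨a, h, by simp⟩
          have hbC : b ∉ C := fun h => hnotouch ⟨b, h, by simp⟩
          rw [hfval, hfval, hToff a haC, hToff b hbC, sub_self]
    -- energy identity
    have hid : genH Γ x₀ n lam hsymm ω = genH Γ x₀ n lam hsymm (T ω) +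
        ((m : ℝ) * (lam v₂ v₂ - lam v₁ v₁) + ((m : ℝ) + 3) * (lam v₂ v₁ - lam v₁ v₁)) := by
      rw [hH ω, hH (T ω), ← hdiff, Finset.sum_sub_distrib]
      ring
    rw [hid, hKdef, ← Real.exp_add]
    congr 1
    have : (γ.ncard : ℝ) = (m : ℝ) + 3 := by rw [hγcard]; push_cast; ring
    rw [this]
    ring
  -- injectivity of T on A ∩ Ω
  have hTinj : ∀ ω₁ ∈ A ∩ Ω, ∀ ω₂ ∈ A ∩ Ω, T ω₁ = T ω₂ → ω₁ = ω₂ := by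
    rintro ω₁ ⟨hA1, hΩ1⟩ ω₂ ⟨hA2, hΩ2⟩ hT12
    obtain ⟨hcomp₁, hbd₁⟩ := hCofspec ω₁ hA1
    obtain ⟨hcomp₂, hbd₂⟩ := hCofspec ω₂ hA2
    have hCB1 : Cof ω₁ ⊆ B := hCB ω₁ ⟨hA1, hΩ1⟩
    have hCB2 : Cof ω₂ ⊆ B := hCB ω₂ ⟨hA2, hΩ2⟩
    have hfin1 : (Cof ω₁).Finite := hBfin.subset hCB1
    have hfin2 : (Cof ω₂).Finite := hBfin.subset hCB2
    have hsub : ∀ (σ₁ σ₂ : V → W), σ₁ ∈ A → σ₂ ∈ A → σ₁ ∈ Ω → σ₂ ∈ Ω → T σ₁ = T σ₂ →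
        Cof σ₁ ⊆ Cof σ₂ := by
      intro σ₁ σ₂ hA1' hA2' hΩ1' hΩ2' hT'
      obtain ⟨hcompa, hbda⟩ := hCofspec σ₁ hA1'
      obtain ⟨hcompb, hbdb⟩ := hCofspec σ₂ hA2'
      by_contra hns
      obtain ⟨z, hz1, hz2⟩ := Set.not_subset.mp hns
      by_cases hint : ∃ p, p ∈ Cof σ₁ ∧ p ∈ Cof σ₂
      · obtain ⟨p, hp1, hp2⟩ := hint
        obtain ⟨wk, hwk⟩ := exists_walk_in hcompa.2.2.1 hz1 hp1
        obtain ⟨u, w, hu1, hu2, hw1, hw2, huw⟩ := walk_crossing wk hz2 hp2 hwk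
        have huOB : u ∈ outerBoundary Γ (Cof σ₂) := ⟨hu2, w, hw2, huw⟩
        rw [hbdb, ← hbda] at huOB
        exact huOB.1 hu1
      · -- disjoint components with the same boundary: impossible
        have hfa : (Cof σ₁).Finite := hBfin.subset (hCB σ₁ ⟨hA1', hΩ1'⟩)
        obtain ⟨ma, -, hOBfa, hOBca, -⟩ := contour_count hΓ hfa hcompa.2.2.1
        have h2lt : 1 < (outerBoundary Γ (Cof σ₁)).ncard := by omega
        obtain ⟨a, b, ha, hb, hab⟩ := (Set.one_lt_ncard_iff hOBfa).mp h2lt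
        have hbda' : outerBoundary Γ (Cof σ₂) = outerBoundary Γ (Cof σ₁) := by
          rw [hbdb, ← hbda]
        exact not_disjoint_same_boundary hΓ.2.1 hcompa.2.2.1 hcompb.2.2.1
          (fun x hx => hint ⟨x, hx⟩) hab ha (hbda' ▸ ha) hb (hbda' ▸ hb)
    have h12 : Cof ω₁ ⊆ Cof ω₂ := hsub ω₁ ω₂ hA1 hA2 hΩ1 hΩ2 hT12
    have h21 : Cof ω₂ ⊆ Cof ω₁ := hsub ω₂ ω₁ hA2 hA1 hΩ2 hΩ1 hT12.symm
    have hCeq : Cof ω₁ = Cof ω₂ := subset_antisymm h12 h21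
    funext x
    by_cases hx : x ∈ Cof ω₁
    · have h1 : ω₁ x = v₂ := hcomp₁.1 hx
      have h2 : ω₂ x = v₂ := hcomp₂.1 (hCeq ▸ hx)
      rw [h1, h2]
    · have := congrFun hT12 x
      rw [hTdef] at this
      simp only [if_neg hx, if_neg (hCeq ▸ hx : x ∉ Cof ω₂)] at this
      exact this
  -- assemble
  rw [genGibbs]
  have hnum : ∑ᶠ ω ∈ A ∩ OmegaGen Γ x₀ n v₁ v₂, Real.exp (-β * genH Γ x₀ n lam hsymm ω) =
      ∑ ω ∈ hEvfin.toFinset, Real.exp (-β * genH Γ x₀ n lam hsymm ω) := by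
    exact finsum_mem_eq_finite_toFinset_sum _ hEvfin
  have hden : ∑ᶠ ω ∈ OmegaGen Γ x₀ n v₁ v₂, Real.exp (-β * genH Γ x₀ n lam hsymm ω) =
      ∑ ω ∈ hΩfin.toFinset, Real.exp (-β * genH Γ x₀ n lam hsymm ω) := by
    exact finsum_mem_eq_finite_toFinset_sum _ hΩfin
  rw [hnum, hden]
  have hdenpos : 0 < ∑ ω ∈ hΩfin.toFinset, Real.exp (-β * genH Γ x₀ n lam hsymm ω) := by
    apply Finset.sum_pos (fun ω _ => Real.exp_pos _)
    refine ⟨fun _ => v₁, ?_⟩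
    rw [Set.Finite.mem_toFinset]
    exact ⟨fun x => Or.inl rfl, fun x _ => rfl⟩
  rw [div_le_iff₀ hdenpos]
  calc ∑ ω ∈ hEvfin.toFinset, Real.exp (-β * genH Γ x₀ n lam hsymm ω)
      = ∑ ω ∈ hEvfin.toFinset, K * Real.exp (-β * genH Γ x₀ n lam hsymm (T ω)) := by
        refine Finset.sum_congr rfl (fun ω hω => ?_)
        rw [Set.Finite.mem_toFinset] at hω
        exact (key ω hω).2
    _ = ∑ ω' ∈ hEvfin.toFinset.image T, K * Real.exp (-β * genH Γ x₀ n lam hsymm ω') := by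
        rw [Finset.sum_image]
        intro x hx y hy hxy
        simp only [Finset.mem_coe, Set.Finite.mem_toFinset] at hx hy
        exact hTinj x hx y hy hxy
    _ ≤ ∑ ω' ∈ hΩfin.toFinset, K * Real.exp (-β * genH Γ x₀ n lam hsymm ω') := by
        apply Finset.sum_le_sum_of_subset_of_nonneg
        · intro ω' hω'
          rw [Finset.mem_image] at hω'
          obtain ⟨ω, hω, rfl⟩ := hω'
          rw [Set.Finite.mem_toFinset] at hω ⊢
          exact (key ω hω).1
        · intro i _ _
          positivity
    _ = K * ∑ ω' ∈ hΩfin.toFinset, Real.exp (-β * genH Γ x₀ n lam hsymm ω') := by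
        rw [Finset.mul_sum]
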